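/- If J ⊆ I is spherical (any two distinct vertices of J are adjacent in 𝒢), then the subgroup Γ_J of the graph product Γ is isomorphic to the direct product of the groups G_j for j ∈ J. -/

import Mathlib

/-- The commutation relators of a graph product along the graph with adjacency `adj`. -/
def graphProdRels {I : Type*} (adj : I → I → Prop) (G : I → Type*) [∀ i, Group (G i)] :
    Set (Monoid.CoprodI G) :=
  { x | ∃ (i j : I), adj i j ∧ ∃ (gi : G i) (gj : G j),
      x = Monoid.CoprodI.of gi * Monoid.CoprodI.of gj *
        (Monoid.CoprodI.of gi)⁻¹ * (Monoid.CoprodI.of gj)⁻¹ }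

/-- The graph product of the groups `G i` along the graph with adjacency relation `adj`:
the quotient of the free product by the normal closure of the commutation relators. -/
abbrev GraphProd {I : Type*} (adj : I → I → Prop) (G : I → Type*) [∀ i, Group (G i)] :
    Type _ :=
  Monoid.CoprodI G ⧸ Subgroup.normalClosure (graphProdRels adj G)

/-- The canonical homomorphism from a vertex group into the graph product. -/
def GraphProd.of {I : Type*} (adj : I → I → Prop) (G : I → Type*) [∀ i, Group (G i)]
    (i : I) : G i →* GraphProd adj G :=
  (QuotientGroup.mk' _).comp Monoid.CoprodI.of

/-- The parabolic subgroup `Γ_J` generated by the images of the `G j`, `j ∈ J`. -/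
def GraphProd.parab {I : Type*} (adj : I → I → Prop) (G : I → Type*) [∀ i, Group (G i)]
    (J : Set I) : Subgroup (GraphProd adj G) :=
  ⨆ j ∈ J, (GraphProd.of adj G j).range

/-!
The vertex groups of a clique `J` commute pairwise, so they assemble into a homomorphism from
`Π j : J, G j` onto `Γ_J`. Conversely, sending `G j` to the `j`-th factor for `j ∈ J` and every
other vertex group to `1` respects the commutation relators, because adjacent vertices are
distinct and distinct factors of a product commute. This defines a retraction of the first map,
which is therefore injective.
-/

namespace GraphProd

variable {I : Type*} {adj : I → I → Prop} {G : I → Type*} [∀ i, Group (G i)]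

theorem of_commute {i j : I} (h : adj i j) (x : G i) (y : G j) :
    Commute (of adj G i x) (of adj G j y) := by
  have hrel : (QuotientGroup.mk (Monoid.CoprodI.of x * Monoid.CoprodI.of y *
      (Monoid.CoprodI.of x)⁻¹ * (Monoid.CoprodI.of y)⁻¹) : GraphProd adj G) = 1 :=
    (QuotientGroup.eq_one_iff _).mpr (Subgroup.subset_normalClosure ⟨i, j, h, x, y, rfl⟩)
  rw [← commutatorElement_eq_one_iff_commute, commutatorElement_def]
  simpa only [of, MonoidHom.comp_apply, QuotientGroup.mk'_apply, QuotientGroup.mk_mul,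
    QuotientGroup.mk_inv] using hrel

def lift {H : Type*} [Group H] (f : ∀ i, G i →* H)
    (hf : ∀ i j, adj i j → ∀ (x : G i) (y : G j), Commute (f i x) (f j y)) :
    GraphProd adj G →* H :=
  QuotientGroup.lift _ (Monoid.CoprodI.lift f) <| Subgroup.normalClosure_le_normal <| by
    rintro _ ⟨i, j, hij, x, y, rfl⟩
    rw [SetLike.mem_coe, MonoidHom.mem_ker, ← commutatorElement_def, map_commutatorElement,
      Monoid.CoprodI.lift_of, Monoid.CoprodI.lift_of,
      commutatorElement_eq_one_iff_commute]
    exact hf i j hij x y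

@[simp]
theorem lift_of {H : Type*} [Group H] (f : ∀ i, G i →* H)
    (hf : ∀ i j, adj i j → ∀ (x : G i) (y : G j), Commute (f i x) (f j y)) (i : I) (x : G i) :
    lift f hf (of adj G i x) = f i x :=
  Monoid.CoprodI.lift_of f x

def toPi [DecidableEq I] (hirr : ∀ i, ¬ adj i i) (J : Finset I) :
    GraphProd adj G →* ((j : J) → G j) :=
  lift (fun i => if h : i ∈ J then
      (MonoidHom.mulSingle (fun j : J => G j) ⟨i, h⟩ : G i →* ((j : J) → G j)) else 1) <| by
    intro i j hij x y
    have hne : i ≠ j := by rintro rfl; exact hirr i hij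
    by_cases hi : i ∈ J
    · by_cases hj : j ∈ J
      · simp only [dif_pos hi, dif_pos hj, MonoidHom.mulSingle_apply]
        exact Pi.mulSingle_commute (f := fun j : J => G j)
          (show (⟨i, hi⟩ : J) ≠ ⟨j, hj⟩ from fun h => hne (congrArg Subtype.val h)) x y
      · simp only [dif_neg hj, MonoidHom.one_apply, Commute.one_right]
    · simp only [dif_neg hi, MonoidHom.one_apply, Commute.one_left]

theorem toPi_of [DecidableEq I] (hirr : ∀ i, ¬ adj i i) {J : Finset I} (j : J) (x : G j) :
    toPi hirr J (of adj G j x) = Pi.mulSingle j x := by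
  simp [toPi, j.2]

noncomputable def ofPi {J : Finset I} (hJ : (J : Set I).Pairwise adj) :
    ((j : J) → G j) →* GraphProd adj G :=
  MonoidHom.noncommPiCoprod (fun j : J => of adj G j) (show Pairwise _ from fun _ _ hne x y =>
    of_commute (hJ (Subtype.prop _) (Subtype.prop _) (Subtype.coe_injective.ne hne)) x y)

theorem ofPi_mulSingle [DecidableEq I] {J : Finset I} (hJ : (J : Set I).Pairwise adj) (j : J)
    (x : G j) :
    ofPi hJ (Pi.mulSingle j x) = of adj G j x :=
  MonoidHom.noncommPiCoprod_mulSingle (fun j : J => of adj G j) j x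

theorem range_ofPi {J : Finset I} (hJ : (J : Set I).Pairwise adj) :
    (ofPi hJ).range = parab adj G J := by
  rw [ofPi, MonoidHom.noncommPiCoprod_range, parab, iSup_subtype]
  rfl

theorem toPi_comp_ofPi [DecidableEq I] (hirr : ∀ i, ¬ adj i i) {J : Finset I}
    (hJ : (J : Set I).Pairwise adj) :
    (toPi hirr J).comp (ofPi hJ) = MonoidHom.id ((j : J) → G j) :=
  MonoidHom.pi_ext fun j x => by
    rw [MonoidHom.comp_apply, ofPi_mulSingle, toPi_of, MonoidHom.id_apply]

theorem ofPi_injective (hirr : ∀ i, ¬ adj i i) {J : Finset I} (hJ : (J : Set I).Pairwise adj) :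
    Function.Injective (ofPi (G := G) hJ) := by
  classical
  exact Function.LeftInverse.injective (g := toPi hirr J)
    (DFunLike.congr_fun (toPi_comp_ofPi hirr hJ))

end GraphProd

theorem graphProd_parab_spherical_iso_pi_general {I : Type*} (adj : I → I → Prop) (G : I → Type*)
    [∀ i, Group (G i)] (hirr : ∀ i, ¬ adj i i)
    (J : Finset I) (hJ : (J : Set I).Pairwise adj) :
    Nonempty ((GraphProd.parab adj G ↑J) ≃* ((j : J) → G j)) :=
  ⟨(MulEquiv.subgroupCongr (GraphProd.range_ofPi hJ).symm).trans
    (MonoidHom.ofInjective (GraphProd.ofPi_injective hirr hJ)).symm⟩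

/-- If `J ⊆ I` is spherical (any two distinct vertices of `J` are adjacent),
then `Γ_J` is isomorphic to the direct product of the `G j`, `j ∈ J`. -/
theorem graphProd_parab_spherical_iso_pi {I : Type*} (adj : I → I → Prop) (G : I → Type*)
    [∀ i, Group (G i)] (hsymm : Symmetric adj) (hirr : ∀ i, ¬ adj i i)
    (J : Finset I) (hJ : (J : Set I).Pairwise adj) :
    Nonempty ((GraphProd.parab adj G ↑J) ≃* ((j : J) → G j)) :=
  graphProd_parab_spherical_iso_pi_general adj G hirr J hJ
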